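/- Let g : [A,B] → ℂ be continuous with g(y) ≠ 0 for all y, and set f(x) = ρ(l⁻¹(x)) g(l⁻¹(x)). Define ψ_k on [a,b] by ψ_k = X⁽ᵏ⁾/f for even k and ψ_k = X̃⁽ᵏ⁾/f for odd k, and Ψ_k on [A,B] by Ψ_k = Y⁽ᵏ⁾/g for even k and Ψ_k = Ỹ⁽ᵏ⁾/g for odd k, where the systems X̃, X (with base point l(y₀)) and Ỹ, Y (with base point y₀) are defined by the recursions X̃⁽⁰⁾ = X⁽⁰⁾ = Ỹ⁽⁰⁾ = Y⁽⁰⁾ ≡ 1, X̃⁽ⁿ⁾(x) = n ∫_{l(y₀)}^{x} X̃⁽ⁿ⁻¹⁾ (f²)^{(−1)^{n−1}}, X⁽ⁿ⁾(x) = n ∫_{l(y₀)}^{x} X⁽ⁿ⁻¹⁾ (f²)^{(−1)^{n}}, Ỹ⁽ᵏ⁾(y) = k ∫_{y₀}^{y} Ỹ⁽ᵏ⁻¹⁾ g² r (k odd), Ỹ⁽ᵏ⁾(y) = k ∫_{y₀}^{y} Ỹ⁽ᵏ⁻¹⁾ / (g² p) (k even), Y⁽ᵏ⁾(y) = k ∫_{y₀}^{y}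 Y⁽ᵏ⁻¹⁾ / (g² p) (k odd), Y⁽ᵏ⁾(y) = k ∫_{y₀}^{y} Y⁽ᵏ⁻¹⁾ g² r (k even). Then Ψ_n(y)/ρ(y) = ψ_n(l(y)) for every n ∈ ℕ ∪ {0} and every y ∈ [A,B]. -/

import Mathlib

open MeasureTheory

/-!
The substitution `x = l y` has `dx = √(r/p) dy`, and `f (l y) = ρ y * g y` with `ρ² = √(p r)`.
Hence `√(r/p) f² = g² r` and `√(r/p) f⁻² = (g² p)⁻¹`: the substitution turns the recursions
for `X`, `X̃` into those for `Y`, `Ỹ`, so by induction `Y⁽ⁿ⁾ = X⁽ⁿ⁾ ∘ l` and `Ỹ⁽ⁿ⁾ = X̃⁽ⁿ⁾ ∘ l`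
on `[A, B]`. Dividing by `g ρ = f ∘ l` gives the claim.
-/

open Set intervalIntegral

section Substitution

variable {A B c : ℝ} {φ l : ℝ → ℝ}

theorem hasDerivAt_integral_of_continuousOn_Icc (hφ : ContinuousOn φ (Icc A B))
    (hc : c ∈ Icc A B) {x : ℝ} (hx : x ∈ Ioo A B) :
    HasDerivAt (fun y => ∫ t in c..y, φ t) (φ x) x :=
  integral_hasDerivAt_right
    (hφ.mono (uIcc_subset_Icc hc (Ioo_subset_Icc_self hx))).intervalIntegrable
    ((hφ.mono Ioo_subset_Icc_self).stronglyMeasurableAtFilter isOpen_Ioo x hx)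
    (hφ.continuousAt (Icc_mem_nhds hx.1 hx.2))

/-- As `l` is monotone, the substitution needs no regularity of `F`. -/
theorem integral_smul_comp_primitive {E : Type*} [NormedAddCommGroup E] [NormedSpace ℝ E]
    (hφ : ContinuousOn φ (Icc A B)) (hφ₀ : ∀ x ∈ Icc A B, 0 ≤ φ x) (hc : c ∈ Icc A B)
    (hl : ∀ y, l y = ∫ t in c..y, φ t) {y₁ y₂ : ℝ} (hy₁ : y₁ ∈ Icc A B) (hy₂ : y₂ ∈ Icc A B)
    (F : ℝ → E) :
    ∫ t in y₁..y₂, φ t • F (l t) = ∫ u in l y₁..l y₂, F u := by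
  have hAB : A ≤ B := hc.1.trans hc.2
  have hsub : uIcc y₁ y₂ ⊆ Icc A B := uIcc_subset_Icc hy₁ hy₂
  have hinterior : Ioo (min y₁ y₂) (max y₁ y₂) ⊆ Ioo A B :=
    Ioo_subset_Ioo (le_min hy₁.1 hy₂.1) (max_le hy₁.2 hy₂.2)
  have hl' : l = fun y => ∫ t in c..y, φ t := funext hl
  subst hl'
  refine integral_deriv_smul_comp_of_deriv_nonneg ?_
    (fun x hx => hasDerivAt_integral_of_continuousOn_Icc hφ hc (hinterior hx))
    (fun x hx => hφ₀ x (Ioo_subset_Icc_self (hinterior hx)))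
  have hcont := continuousOn_primitive_interval' (μ := volume) (a := c)
    (hφ.intervalIntegrable_of_Icc hAB) (by rwa [uIcc_of_le hAB])
  rw [uIcc_of_le hAB] at hcont
  exact hcont.mono hsub

end Substitution

theorem sq_rpow_one_div_four {x : ℝ} (hx : 0 ≤ x) : (x ^ (1 / 4 : ℝ)) ^ 2 = √x := by
  rw [← Real.rpow_natCast, ← Real.rpow_mul hx, Real.sqrt_eq_rpow]
  norm_num

theorem sqrt_div_mul_sqrt_mul {p r : ℝ} (hp : 0 < p) (hr : 0 < r) : √(r / p) * √(p * r) = r := by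
  rw [← Real.sqrt_mul (div_nonneg hr.le hp.le), show r / p * (p * r) = r ^ 2 by field_simp,
    Real.sqrt_sq hr.le]

theorem sqrt_div_div_sqrt_mul {p r : ℝ} (hp : 0 < p) (hr : 0 < r) : √(r / p) / √(p * r) = p⁻¹ := by
  rw [← Real.sqrt_div' _ (mul_pos hp hr).le, show r / p / (p * r) = p⁻¹ ^ 2 by field_simp,
    Real.sqrt_sq (inv_nonneg.2 hp.le)]

theorem sqrt_div_smul_sq_zpow_neg_one_pow {p r : ℝ} (hp : 0 < p) (hr : 0 < r) (z : ℂ) (m : ℕ) :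
    √(r / p) • (((((p * r) ^ (1 / 4 : ℝ) : ℝ) : ℂ) * z) ^ 2) ^ ((-1 : ℤ) ^ m) =
      if Even m then z ^ 2 * r else (z ^ 2 * p)⁻¹ := by
  have hsq := sq_rpow_one_div_four (mul_pos hp hr).le
  rcases Nat.even_or_odd m with hm | hm
  · have h := congrArg ((↑) : ℝ → ℂ) (sqrt_div_mul_sqrt_mul hp hr)
    rw [hm.neg_one_pow, zpow_one, if_pos hm, Complex.real_smul, mul_pow, ← Complex.ofReal_pow,
      hsq, ← h]
    push_cast
    ring
  · have h := congrArg ((↑) : ℝ → ℂ) (sqrt_div_div_sqrt_mul hp hr)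
    rw [hm.neg_one_pow, zpow_neg_one, if_neg (Nat.not_even_iff_odd.2 hm), Complex.real_smul,
      mul_pow, ← Complex.ofReal_pow, hsq]
    push_cast at h
    rw [mul_inv, mul_inv, ← h]
    ring

theorem eq_comp_of_integral_recursion {s t : Set ℝ} [s.OrdConnected] {l w : ℝ → ℝ} {y₀ : ℝ}
    (hy₀ : y₀ ∈ s) (hl : MapsTo l s t)
    (hsubst : ∀ (F : ℝ → ℂ), ∀ y ∈ s, ∫ u in y₀..y, w u • F (l u) = ∫ x in l y₀..l y, F x)
    {X Y v : ℕ → ℝ → ℂ} (c : ℕ → ℂ)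
    (hX : ∀ n, ∀ x ∈ t, X (n + 1) x = c n * ∫ u in l y₀..x, X n u * v n u)
    (hY : ∀ n, ∀ y ∈ s, Y (n + 1) y = c n * ∫ u in y₀..y, Y n u * (w u • v n (l u)))
    (hY₀ : ∀ y ∈ s, Y 0 y = X 0 (l y)) :
    ∀ n, ∀ y ∈ s, Y n y = X n (l y) := by
  intro n
  induction n with
  | zero => exact hY₀
  | succ n ih =>
    intro y hy
    rw [hY n y hy, hX n (l y) (hl hy), ← hsubst _ y hy]
    congr 1
    refine integral_congr fun u hu => ?_
    rw [ih u (OrdConnected.uIcc_subset ‹_› hy₀ hy hu), mul_smul_comm]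

theorem second_kind_formal_powers_transform_general
    (A B : ℝ)
    (p r : ℝ → ℝ)
    (hp : ContinuousOn p (Set.Icc A B))
    (hr : ContinuousOn r (Set.Icc A B))
    (hppos : ∀ y ∈ Set.Icc A B, 0 < p y)
    (hrpos : ∀ y ∈ Set.Icc A B, 0 < r y)
    (y₀ : ℝ) (hy₀ : y₀ ∈ Set.Icc A B)
    (l : ℝ → ℝ) (hl : ∀ y, l y = ∫ s in y₀..y, Real.sqrt (r s / p s))
    (ρ : ℝ → ℝ) (hρ : ∀ y, ρ y = (p y * r y) ^ (1 / 4 : ℝ))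
    (a b : ℝ) (ha : a = l A) (hb : b = l B)
    (hmono : StrictMonoOn l (Set.Icc A B))
    (linv : ℝ → ℝ)
    (hlinv_left : ∀ y ∈ Set.Icc A B, linv (l y) = y)
    (g : ℝ → ℂ)
    (f : ℝ → ℂ) (hf : ∀ x, f x = (ρ (linv x) : ℂ) * g (linv x))
    (Xt X : ℕ → ℝ → ℂ) (Yt Y : ℕ → ℝ → ℂ)
    (hXt0 : ∀ x, Xt 0 x = 1) (hX0 : ∀ x, X 0 x = 1)
    (hXt : ∀ n : ℕ, ∀ x ∈ Set.Icc a b,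
      Xt (n + 1) x = ((n : ℂ) + 1) * ∫ s in (l y₀)..x, Xt n s * (f s ^ 2) ^ ((-1 : ℤ) ^ n))
    (hX : ∀ n : ℕ, ∀ x ∈ Set.Icc a b,
      X (n + 1) x = ((n : ℂ) + 1) * ∫ s in (l y₀)..x, X n s * (f s ^ 2) ^ ((-1 : ℤ) ^ (n + 1)))
    (hYt0 : ∀ y, Yt 0 y = 1) (hY0 : ∀ y, Y 0 y = 1)
    (hYt_odd : ∀ k : ℕ, Odd (k + 1) → ∀ y ∈ Set.Icc A B,
      Yt (k + 1) y = ((k : ℂ) + 1) * ∫ s in y₀..y, Yt k s * (g s ^ 2 * (r s : ℂ)))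
    (hYt_even : ∀ k : ℕ, Even (k + 1) → ∀ y ∈ Set.Icc A B,
      Yt (k + 1) y = ((k : ℂ) + 1) * ∫ s in y₀..y, Yt k s / (g s ^ 2 * (p s : ℂ)))
    (hY_odd : ∀ k : ℕ, Odd (k + 1) → ∀ y ∈ Set.Icc A B,
      Y (k + 1) y = ((k : ℂ) + 1) * ∫ s in y₀..y, Y k s / (g s ^ 2 * (p s : ℂ)))
    (hY_even : ∀ k : ℕ, Even (k + 1) → ∀ y ∈ Set.Icc A B,
      Y (k + 1) y = ((k : ℂ) + 1) * ∫ s in y₀..y, Y k s * (g s ^ 2 * (r s : ℂ)))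
    :
    ∀ n : ℕ, ∀ y ∈ Set.Icc A B,
      (Even n → (Y n y / g y) / (ρ y : ℂ) = X n (l y) / f (l y)) ∧
      (Odd n → (Yt n y / g y) / (ρ y : ℂ) = Xt n (l y) / f (l y)) := by
  have hφ : ContinuousOn (fun s => √(r s / p s)) (Icc A B) :=
    (hr.div hp fun s hs => (hppos s hs).ne').sqrt
  have hsubst (F : ℝ → ℂ) (y : ℝ) (hy : y ∈ Icc A B) :
      ∫ u in y₀..y, √(r u / p u) • F (l u) = ∫ x in l y₀..l y, F x :=
    integral_smul_comp_primitive hφ (fun _ _ => Real.sqrt_nonneg _) hy₀ hl hy₀ hy F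
  have hmaps : MapsTo l (Icc A B) (Icc a b) := ha ▸ hb ▸ hmono.monotoneOn.mapsTo_Icc
  have hweight (u : ℝ) (hu : u ∈ Icc A B) (m : ℕ) :
      √(r u / p u) • (f (l u) ^ 2) ^ ((-1 : ℤ) ^ m) =
        if Even m then g u ^ 2 * r u else (g u ^ 2 * p u)⁻¹ := by
    rw [hf, hlinv_left u hu, hρ]
    exact sqrt_div_smul_sq_zpow_neg_one_pow (hppos u hu) (hrpos u hu) (g u) m
  have hrec {Z : ℕ → ℝ → ℂ} (k : ℕ → ℕ)
      (heven : ∀ n, Even (k n) → ∀ y ∈ Icc A B,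
        Z (n + 1) y = (n + 1) * ∫ u in y₀..y, Z n u * (g u ^ 2 * r u))
      (hodd : ∀ n, Odd (k n) → ∀ y ∈ Icc A B,
        Z (n + 1) y = (n + 1) * ∫ u in y₀..y, Z n u / (g u ^ 2 * p u))
      (n : ℕ) (y : ℝ) (hy : y ∈ Icc A B) : Z (n + 1) y =
        (n + 1) * ∫ u in y₀..y, Z n u * (√(r u / p u) • (f (l u) ^ 2) ^ ((-1 : ℤ) ^ k n)) := by
    rw [integral_congr fun u hu =>
      congrArg (Z n u * ·) (hweight u (uIcc_subset_Icc hy₀ hy hu) (k n))]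
    by_cases h : Even (k n)
    · simpa only [if_pos h] using heven n h y hy
    · simpa only [if_neg h, div_eq_mul_inv] using hodd n (Nat.not_even_iff_odd.1 h) y hy
  have hYX := eq_comp_of_integral_recursion hy₀ hmaps hsubst _ hX
    (hrec (· + 1) hY_even hY_odd) (fun y _ => by rw [hY0, hX0])
  have hYtXt := eq_comp_of_integral_recursion hy₀ hmaps hsubst _ hXt
    (hrec id (fun n h => hYt_odd n h.add_one) (fun n h => hYt_even n h.add_one))
    (fun y _ => by rw [hYt0, hXt0])
  intro n y hy
  have hfl : f (l y) = g y * ρ y := by rw [hf, hlinv_left y hy, mul_comm]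
  simp only [hfl, div_div, hYX n y hy, hYtXt n y hy, implies_true, and_self]

theorem second_kind_formal_powers_transform
    (A B : ℝ) (hAB : A < B)
    (p r : ℝ → ℝ)
    (hp : ContinuousOn p (Set.Icc A B))
    (hr : ContinuousOn r (Set.Icc A B))
    (hppos : ∀ y ∈ Set.Icc A B, 0 < p y)
    (hrpos : ∀ y ∈ Set.Icc A B, 0 < r y)
    (y₀ : ℝ) (hy₀ : y₀ ∈ Set.Icc A B)
    (l : ℝ → ℝ) (hl : ∀ y, l y = ∫ s in y₀..y, Real.sqrt (r s / p s))
    (ρ : ℝ → ℝ) (hρ : ∀ y, ρ y = (p y * r y) ^ (1 / 4 : ℝ))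
    (a b : ℝ) (ha : a = l A) (hb : b = l B)
    (hmono : StrictMonoOn l (Set.Icc A B))
    (linv : ℝ → ℝ)
    (hlinv_maps : Set.MapsTo linv (Set.Icc a b) (Set.Icc A B))
    (hlinv_left : ∀ y ∈ Set.Icc A B, linv (l y) = y)
    (hlinv_right : ∀ x ∈ Set.Icc a b, l (linv x) = x)
    (g : ℝ → ℂ) (hg : ContinuousOn g (Set.Icc A B))
    (hgne : ∀ y ∈ Set.Icc A B, g y ≠ 0)
    (f : ℝ → ℂ) (hf : ∀ x, f x = (ρ (linv x) : ℂ) * g (linv x))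
    (Xt X : ℕ → ℝ → ℂ) (Yt Y : ℕ → ℝ → ℂ)
    (hXt0 : ∀ x, Xt 0 x = 1) (hX0 : ∀ x, X 0 x = 1)
    (hXt : ∀ n : ℕ, ∀ x ∈ Set.Icc a b,
      Xt (n + 1) x = ((n : ℂ) + 1) * ∫ s in (l y₀)..x, Xt n s * (f s ^ 2) ^ ((-1 : ℤ) ^ n))
    (hX : ∀ n : ℕ, ∀ x ∈ Set.Icc a b,
      X (n + 1) x = ((n : ℂ) + 1) * ∫ s in (l y₀)..x, X n s * (f s ^ 2) ^ ((-1 : ℤ) ^ (n + 1)))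
    (hYt0 : ∀ y, Yt 0 y = 1) (hY0 : ∀ y, Y 0 y = 1)
    (hYt_odd : ∀ k : ℕ, Odd (k + 1) → ∀ y ∈ Set.Icc A B,
      Yt (k + 1) y = ((k : ℂ) + 1) * ∫ s in y₀..y, Yt k s * (g s ^ 2 * (r s : ℂ)))
    (hYt_even : ∀ k : ℕ, Even (k + 1) → ∀ y ∈ Set.Icc A B,
      Yt (k + 1) y = ((k : ℂ) + 1) * ∫ s in y₀..y, Yt k s / (g s ^ 2 * (p s : ℂ)))
    (hY_odd : ∀ k : ℕ, Odd (k + 1) → ∀ y ∈ Set.Icc A B,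
      Y (k + 1) y = ((k : ℂ) + 1) * ∫ s in y₀..y, Y k s / (g s ^ 2 * (p s : ℂ)))
    (hY_even : ∀ k : ℕ, Even (k + 1) → ∀ y ∈ Set.Icc A B,
      Y (k + 1) y = ((k : ℂ) + 1) * ∫ s in y₀..y, Y k s * (g s ^ 2 * (r s : ℂ)))
    :
    ∀ n : ℕ, ∀ y ∈ Set.Icc A B,
      (Even n → (Y n y / g y) / (ρ y : ℂ) = X n (l y) / f (l y)) ∧
      (Odd n → (Yt n y / g y) / (ρ y : ℂ) = Xt n (l y) / f (l y)) :=
  second_kind_formal_powers_transform_general A B p r hp hr hppos hrpos y₀ hy₀ l hl ρ hρ a b ha hb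
    hmono linv hlinv_left g f hf Xt X Yt Y hXt0 hX0 hXt hX hYt0 hY0 hYt_odd hYt_even hY_odd hY_even
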